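/- arXiv:1606.00387 — 6 statements merged into one kernel-verified Lean document; each statement's English description precedes it below -/
import Mathlib

section
/- Under the Stochastic Blockmodel with partition matrix Z ∈ {0,1}^{N×K} (each row has exactly one 1), connectivity matrix B ∈ [0,1]^{K×K}, expected adjacency matrix 𝒜 = ZBZᵀ, and complement 𝒜̄ = J_{N×N} − 𝒜, the anti-cluster weight matrix W̃ = (𝒜𝒜̄ + 𝒜̄𝒜)·𝒜 (where · is entrywise product) satisfies W̃ = Z((BΘB̄ + B̄ΘB)·B)Zᵀ, where Θ = ZᵀZ is the diagonal matrix of block sizes and B̄ = J_{K×K} − B. -/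
/-!
A partition matrix is the identity matrix with its rows selected by the block map `f`, so
conjugating by it, `M ↦ Z * M * Zᵀ`, is reindexing `M.submatrix f f`. Reindexing commutes
with entrywise operations (the Hadamard product, subtraction from the all-ones matrix),
and associativity turns `Z B Zᵀ Z B̄ Zᵀ` into `Z (B Θ B̄) Zᵀ`.
-/

open Finset Matrix

namespace Matrix

variable {n m R : Type*}

theorem exists_eq_one_submatrix_of_forall_existsUnique [DecidableEq m] [Zero R] [One R]
    {Z : Matrix n m R} (h01 : ∀ i k, Z i k = 0 ∨ Z i k = 1) (hrow : ∀ i, ∃! k, Z i k = 1) :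
    ∃ f : n → m, Z = (1 : Matrix m m R).submatrix f id := by
  choose f hf hf_unique using hrow
  refine ⟨f, Matrix.ext fun i k => ?_⟩
  rw [submatrix_apply, id, one_apply]
  by_cases hk : f i = k
  · rw [if_pos hk, ← hk, hf]
  · rw [if_neg hk]
    exact (h01 i k).resolve_right fun h => hk (hf_unique i k h).symm

theorem one_submatrix_mul_mul_transpose [Fintype m] [DecidableEq m] [NonAssocSemiring R]
    (f : n → m) (M : Matrix m m R) :
    (1 : Matrix m m R).submatrix f id * M * ((1 : Matrix m m R).submatrix f id)ᵀ
      = M.submatrix f f := by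
  have hleft := one_submatrix_mul f (Equiv.refl m) M
  have hright := mul_submatrix_one (Equiv.refl m) f (M.submatrix f id)
  simp only [Equiv.coe_refl, Equiv.refl_symm, Function.id_comp] at hleft hright
  rw [transpose_submatrix, transpose_one, hleft, hright, submatrix_submatrix]
  rfl

end Matrix

theorem stmt1_general {N K : ℕ}
    (Z : Matrix (Fin N) (Fin K) ℝ)
    (hZ01 : ∀ i k, Z i k = 0 ∨ Z i k = 1)
    (hZrow : ∀ i, ∃! k, Z i k = 1)
    (B : Matrix (Fin K) (Fin K) ℝ) :
    let A : Matrix (Fin N) (Fin N) ℝ := Z * B * Zᵀ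
    let Abar : Matrix (Fin N) (Fin N) ℝ := (Matrix.of fun _ _ => (1 : ℝ)) - A
    let Bbar : Matrix (Fin K) (Fin K) ℝ := (Matrix.of fun _ _ => (1 : ℝ)) - B
    let Θ : Matrix (Fin K) (Fin K) ℝ := Zᵀ * Z
    Matrix.hadamard (A * Abar + Abar * A) A
      = Z * Matrix.hadamard (B * Θ * Bbar + Bbar * Θ * B) B * Zᵀ := by
  intro A Abar Bbar Θ
  obtain ⟨f, hZ⟩ := exists_eq_one_submatrix_of_forall_existsUnique hZ01 hZrow
  have hconj : ∀ M : Matrix (Fin K) (Fin K) ℝ, Z * M * Zᵀ = M.submatrix f f := by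
    intro M
    rw [hZ, one_submatrix_mul_mul_transpose]
  have hA : A = B.submatrix f f := hconj B
  have hAbar : Abar = Z * Bbar * Zᵀ := by
    rw [hconj, submatrix_sub, show Abar = _ - A from rfl, hA]
    rfl
  have hsum : A * Abar + Abar * A = Z * (B * Θ * Bbar + Bbar * Θ * B) * Zᵀ := by
    simp only [hAbar, A, Θ, Matrix.mul_add, Matrix.add_mul, Matrix.mul_assoc]
  rw [hsum, hconj, hconj, hA, submatrix_hadamard]

/-- Under the Stochastic Blockmodel with partition matrix `Z`, the anti-cluster
weight matrix `W̃ = (𝒜𝒜̄ + 𝒜̄𝒜)·𝒜` retains the block structure: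
`W̃ = Z((BΘB̄ + B̄ΘB)·B)Zᵀ` with `Θ = ZᵀZ`. -/
theorem stmt1 {N K : ℕ}
    (Z : Matrix (Fin N) (Fin K) ℝ)
    (hZ01 : ∀ i k, Z i k = 0 ∨ Z i k = 1)
    (hZrow : ∀ i, ∃! k, Z i k = 1)
    (B : Matrix (Fin K) (Fin K) ℝ)
    (hB : ∀ k l, 0 ≤ B k l ∧ B k l ≤ 1) :
    let A : Matrix (Fin N) (Fin N) ℝ := Z * B * Zᵀ
    let Abar : Matrix (Fin N) (Fin N) ℝ := (Matrix.of fun _ _ => (1 : ℝ)) - A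
    let Bbar : Matrix (Fin K) (Fin K) ℝ := (Matrix.of fun _ _ => (1 : ℝ)) - B
    let Θ : Matrix (Fin K) (Fin K) ℝ := Zᵀ * Z
    Matrix.hadamard (A * Abar + Abar * A) A
      = Z * Matrix.hadamard (B * Θ * Bbar + Bbar * Θ * B) B * Zᵀ :=
  stmt1_general Z hZ01 hZrow B
end

section
/- Let B = pI + rJ_{K×K} with 0 < r < p + r < 1, and let Θ be a K×K positive diagonal matrix of block sizes with Θ_{ll} r < Θ_{kk}(p+r) for all k ≠ l. Then for k ≠ l, [(BΘB̄)·B]_{kl} / [(BΘB̄)·B]_{kk} > B_{kl}/B_{kk} = r/(p+r). -/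
/-!
Write `S t = ∑ₘ B_{km} Θ_m (1 - B_{mt})`, so that `[(BΘB̄)·B]_{kt} = S t · B_{kt}` and the claim is
`S l > S k`. Only the diagonal part `pI` of `B` distinguishes columns, so
`S l - S k = p (B_{kk} Θ_k - B_{kl} Θ_l) = p ((p + r) Θ_k - r Θ_l)`, which is positive by the
block-size condition.
-/

open Finset Matrix

section PlantedPartition

variable {ι R : Type*} [DecidableEq ι]

def plantedPartitionMatrix [Zero R] [Add R] (p r : R) : Matrix ι ι R :=
  of fun k l => (if k = l then p else 0) + r

theorem plantedPartitionMatrix_apply_self [AddZeroClass R] (p r : R) (k : ι) :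
    plantedPartitionMatrix p r k k = p + r := by
  simp [plantedPartitionMatrix]

theorem plantedPartitionMatrix_apply_of_ne [AddZeroClass R] (p r : R) {k l : ι} (h : k ≠ l) :
    plantedPartitionMatrix p r k l = r := by
  simp [plantedPartitionMatrix, h]

theorem sum_mul_sub_plantedPartitionMatrix [Fintype ι] [CommRing R] (p r : R) (w : ι → R)
    (k l : ι) :
    ∑ m, w m * (plantedPartitionMatrix p r m k - plantedPartitionMatrix p r m l) =
      p * (w k - w l) := by
  simp only [plantedPartitionMatrix, of_apply, add_sub_add_right_eq_sub, mul_sub, mul_ite,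
    mul_zero, sum_sub_distrib, sum_ite_eq', mem_univ, if_true]
  ring

variable [CommRing R] [LinearOrder R] [IsStrictOrderedRing R]

theorem plantedPartitionMatrix_pos {p r : R} (hp : 0 ≤ p) (hr : 0 < r) (k l : ι) :
    0 < plantedPartitionMatrix p r k l := by
  by_cases h : k = l <;> simp [plantedPartitionMatrix, h] <;> linarith

theorem plantedPartitionMatrix_lt_one {p r : R} (hp : 0 ≤ p) (h1 : p + r < 1) (k l : ι) :
    plantedPartitionMatrix p r k l < 1 := by
  by_cases h : k = l <;> simp [plantedPartitionMatrix, h] <;> linarith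

end PlantedPartition

theorem mul_diagonal_mul_apply {ι R : Type*} [Fintype ι] [DecidableEq ι]
    [NonUnitalNonAssocSemiring R] (A C : Matrix ι ι R) (d : ι → R) (i j : ι) :
    (A * diagonal d * C) i j = ∑ m, A i m * d m * C m j := by
  rw [mul_apply]
  simp only [mul_diagonal]

/-- For `B = pI + rJ` with `0 < r < p + r < 1` and positive diagonal block-size
matrix `Θ` satisfying `Θ_{ll} r < Θ_{kk}(p+r)` for `k ≠ l`, the anti-cluster
weights increase the relative probability of out-of-block referrals:
`[(BΘB̄)·B]_{kl} / [(BΘB̄)·B]_{kk} > B_{kl}/B_{kk} = r/(p+r)`. -/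
theorem stmt2 {K : ℕ} (p r : ℝ)
    (hr : 0 < r) (hpr : r < p + r) (h1 : p + r < 1)
    (Θ : Fin K → ℝ) (hΘ : ∀ k, 0 < Θ k)
    (hcond : ∀ k l : Fin K, k ≠ l → Θ l * r < Θ k * (p + r)) :
    let B : Matrix (Fin K) (Fin K) ℝ :=
      Matrix.of fun k l => (if k = l then p else 0) + r
    let Bbar : Matrix (Fin K) (Fin K) ℝ := (Matrix.of fun _ _ => (1 : ℝ)) - B
    let M : Matrix (Fin K) (Fin K) ℝ :=
      Matrix.hadamard (B * Matrix.diagonal Θ * Bbar) B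
    ∀ k l : Fin K, k ≠ l →
      M k l / M k k > B k l / B k k ∧ B k l / B k k = r / (p + r) := by
  intro B Bbar M k l hkl
  have hp : 0 ≤ p := by linarith
  have hBkk : B k k = p + r := plantedPartitionMatrix_apply_self p r k
  have hBkl : B k l = r := plantedPartitionMatrix_apply_of_ne p r hkl
  set S : Fin K → ℝ := fun t => ∑ m, B k m * Θ m * (1 - B m t)
  have hM (t : Fin K) : M k t = S t * B k t := by
    simp only [M, hadamard_apply, mul_diagonal_mul_apply, Bbar, Matrix.sub_apply, of_apply, S]
  have hSk : 0 < S k :=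
    sum_pos (fun m _ => mul_pos (mul_pos (plantedPartitionMatrix_pos hp hr k m) (hΘ m))
      (sub_pos.2 (plantedPartitionMatrix_lt_one hp h1 m k))) ⟨k, mem_univ k⟩
  have hSl : S l - S k = p * ((p + r) * Θ k - r * Θ l) := by
    have h : ∑ m, B k m * Θ m * (B m k - B m l) = p * (B k k * Θ k - B k l * Θ l) :=
      sum_mul_sub_plantedPartitionMatrix p r (fun m => B k m * Θ m) k l
    rw [hBkk, hBkl] at h
    rw [← h, ← sum_sub_distrib]
    exact sum_congr rfl fun m _ => by ring
  have hlt : S k < S l := by nlinarith [hcond k l hkl]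
  have hratio : B k l / B k k = r / (p + r) := by rw [hBkk, hBkl]
  refine ⟨?_, hratio⟩
  rw [hM, hM, mul_div_mul_comm, hratio, gt_iff_lt]
  exact lt_mul_of_one_lt_left (by positivity) ((one_lt_div hSk).2 hlt)
end

section
/- Under the Stochastic Blockmodel with B = pI + rJ_{K×K}, 0 < r < p+r < 1, and K blocks of equal size s (so N = sK), define 𝒜 = ZBZᵀ and the row-normalized transition matrix P_𝒜 = 𝒟⁻¹𝒜 where 𝒟 is the diagonal matrix of row sums of 𝒜. Then the eigenvalues of P_𝒜 are: 1 with multiplicity 1, 1/(Kr/p + 1) with multiplicity K−1, and 0 with multiplicity N−K. -/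
open Finset Matrix Polynomial

/-! `𝒜 = Z B Zᵀ` has constant row sums `d = s (p + K r)`, so `P_𝒜 = Z (d⁻¹ B) Zᵀ`. Moving `Z`
across the product (`charpoly (U V) = X ^ (N - K) * charpoly (V U)`) and using `Zᵀ Z = s • 1`,
the characteristic polynomial of `P_𝒜` is `X ^ (N - K)` times that of `(s / d) (p I + r J)`.
This is a scalar plus a rank-one matrix, with eigenvalues `(s / d) (p + K r) = 1` (once) and
`(s / d) p = 1 / (K r / p + 1)` (`K - 1` times). -/

namespace Matrix

variable {ι κ : Type*} [DecidableEq κ]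

theorem charpoly_scalar_add_vecMulVec {R : Type*} [CommRing R] [Fintype κ] [Nonempty κ] (c : R)
    (u v : κ → R) :
    (scalar κ c + vecMulVec u v).charpoly =
      (X - C (c + u ⬝ᵥ v)) * (X - C c) ^ (Fintype.card κ - 1) := by
  obtain ⟨n, hn⟩ := Nat.exists_eq_add_one_of_ne_zero (Fintype.card_ne_zero (α := κ))
  rw [add_comm, ← sub_neg_eq_add, ← map_neg, charpoly_sub_scalar, charpoly_vecMulVec, hn,
    Nat.add_sub_cancel]
  simp only [sub_comp, X_pow_comp, C_neg, smul_eq_C_mul, mul_comp, X_comp, C_comp, pow_succ,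
    map_add]
  ring

theorem charpoly_smul_ite_add {R : Type*} [CommRing R] [Fintype κ] [Nonempty κ] (t p r : R) :
    (t • of fun k l : κ => (if k = l then p else 0) + r).charpoly =
      (X - C (t * (p + Fintype.card κ * r))) * (X - C (t * p)) ^ (Fintype.card κ - 1) := by
  have hsplit : (t • of fun k l : κ => (if k = l then p else 0) + r) =
      scalar κ (t * p) + vecMulVec (fun _ => t * r) (fun _ => 1) := by
    ext k l
    by_cases hkl : k = l <;> simp [hkl, vecMulVec_apply, mul_add]
  rw [hsplit, charpoly_scalar_add_vecMulVec]
  simp [dotProduct, mul_add, mul_left_comm]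

/-- The block membership matrix `Z` of `z : ι → κ`: `Z i k = 1` iff `z i = k`. -/
def blockMembership (R : Type*) [Zero R] [One R] (z : ι → κ) : Matrix ι κ R :=
  (1 : Matrix κ κ R).submatrix z id

theorem blockMembership_mul_mul_transpose {R : Type*} [NonAssocSemiring R] [Fintype κ]
    (z : ι → κ) (B : Matrix κ κ R) :
    blockMembership R z * B * (blockMembership R z)ᵀ = B.submatrix z z := by
  rw [blockMembership, transpose_submatrix, transpose_one, ← Equiv.coe_refl, one_submatrix_mul,
    mul_submatrix_one]
  rfl

theorem transpose_blockMembership_mul_self {R : Type*} [NonAssocSemiring R] [Fintype ι]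
    (z : ι → κ) :
    (blockMembership R z)ᵀ * blockMembership R z = diagonal fun k => (#{i | z i = k} : R) := by
  ext k l
  rcases eq_or_ne k l with rfl | hkl
  · simp +contextual [blockMembership, mul_apply, one_apply, eq_comm]
  · simp +contextual [blockMembership, mul_apply, one_apply, hkl]

theorem charpoly_submatrix_of_card_fiber_eq {R : Type*} [CommRing R] [Fintype ι] [DecidableEq ι]
    [Fintype κ] {z : ι → κ} {s : ℕ} (hz : ∀ k, #{i | z i = k} = s)
    (hle : Fintype.card κ ≤ Fintype.card ι) (B : Matrix κ κ R) :
    (B.submatrix z z).charpoly =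
      X ^ (Fintype.card ι - Fintype.card κ) * ((s : R) • B).charpoly := by
  rw [← blockMembership_mul_mul_transpose, charpoly_mul_comm_of_le _ _ hle, ← Matrix.mul_assoc,
    transpose_blockMembership_mul_self, smul_eq_diagonal_mul]
  simp only [hz]

end Matrix

theorem Finset.sum_comp_of_card_fiber_eq {ι κ M : Type*} [Fintype ι] [Fintype κ] [DecidableEq κ]
    [AddCommMonoid M] {z : ι → κ} {s : ℕ} (hz : ∀ k, #{i | z i = k} = s) (f : κ → M) :
    ∑ i, f (z i) = s • ∑ k, f k := by
  rw [← sum_fiberwise' univ z f, smul_sum]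
  simp only [sum_const, hz]

theorem stmt3_general {N K s : ℕ} (hK : 0 < K) (hs : 0 < s) (hN : N = s * K)
    (z : Fin N → Fin K)
    (hbal : ∀ k, (Finset.univ.filter (fun i => z i = k)).card = s)
    (p r : ℝ) (hr : 0 < r) (hpr : r < p + r) :
    let A : Matrix (Fin N) (Fin N) ℝ :=
      Matrix.of fun i j => (if z i = z j then p else 0) + r
    let P : Matrix (Fin N) (Fin N) ℝ :=
      Matrix.of fun i j => A i j / (∑ w, A i w)
    P.charpoly = (X - C 1) * (X - C (1 / ((K : ℝ) * r / p + 1))) ^ (K - 1)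
        * X ^ (N - K) := by
  intro A P
  have hp : 0 < p := by linarith
  have : Nonempty (Fin K) := ⟨⟨0, hK⟩⟩
  set B : Matrix (Fin K) (Fin K) ℝ := of fun k l => (if k = l then p else 0) + r
  set d : ℝ := s * (p + K * r)
  have hrow : ∀ i, ∑ w, A i w = d := fun i => by
    rw [show ∑ w, A i w = ∑ w, B (z i) (z w) from rfl, sum_comp_of_card_fiber_eq hbal]
    simp [B, d, sum_add_distrib, mul_add]
  have hP : P = (d⁻¹ • B).submatrix z z := by
    ext i j
    simp only [P, of_apply, hrow]
    simp [A, B, div_eq_inv_mul]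
  have hKN : Fintype.card (Fin K) ≤ Fintype.card (Fin N) := by
    simpa [hN] using Nat.le_mul_of_pos_left K hs
  rw [hP, charpoly_submatrix_of_card_fiber_eq hbal hKN, smul_smul, charpoly_smul_ite_add]
  have hd : d ≠ 0 := by positivity
  have h_top : s * d⁻¹ * (p + K * r) = 1 := by
    rw [mul_right_comm]
    exact mul_inv_cancel₀ hd
  have h_rest : s * d⁻¹ * p = 1 / (K * r / p + 1) := by
    simp only [d]
    field_simp
    ring
  simp only [Fintype.card_fin, h_top, h_rest]
  ring

/-- Eigenvalues of the population transition matrix of a balanced SBM with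
`B = pI + rJ`: eigenvalue `1` with multiplicity 1, `1/(Kr/p + 1)` with
multiplicity `K - 1`, and `0` with multiplicity `N - K`; encoded via the
characteristic polynomial of `P_𝒜 = 𝒟⁻¹𝒜`. -/
theorem stmt3 {N K s : ℕ} (hK : 0 < K) (hs : 0 < s) (hN : N = s * K)
    (z : Fin N → Fin K)
    (hbal : ∀ k, (Finset.univ.filter (fun i => z i = k)).card = s)
    (p r : ℝ) (hr : 0 < r) (hpr : r < p + r) (h1 : p + r < 1) :
    let A : Matrix (Fin N) (Fin N) ℝ :=
      Matrix.of fun i j => (if z i = z j then p else 0) + r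
    let P : Matrix (Fin N) (Fin N) ℝ :=
      Matrix.of fun i j => A i j / (∑ w, A i w)
    P.charpoly = (X - C 1) * (X - C (1 / ((K : ℝ) * r / p + 1))) ^ (K - 1)
        * X ^ (N - K) :=
  stmt3_general hK hs hN z hbal p r hr hpr
end

section
/- Under the Stochastic Blockmodel with B = pI + rJ_{K×K}, 0 < r < p+r < 1, K blocks of equal size, and population anti-cluster weight matrix W̃ = (𝒜𝒜̄ + 𝒜̄𝒜)·𝒜, the second eigenvalues satisfy 0 < λ₂(P_W̃) < λ₂(P_𝒜) < 1, and moreover the gap λ₂(P_𝒜) − λ₂(P_W̃) depends only on K, p, r, not on the number of nodes N. -/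
/-!
Both `𝒜` and `W̃` are block-constant: `M i j = a [z i = z j] + b`. Such matrices are closed
under sums, products and Hadamard products, have constant row sums `s (a + K b)`, and factor as
`M = E T` through the `K × K` matrix `T E = s (a I + b J)`. Hence the spectrum of `P_M` is `1`
once, `a / (a + K b)` with multiplicity `K - 1`, and `0` otherwise. For `𝒜` this gives
`ν = p / (p + K r)`; for `W̃` one computes `(a, b) = (2 s p v, 2 s u r)` with
`v = u - r p - p² < u`, so `μ = p v / (p v + K u r) < ν`.
-/

open Finset Matrix Polynomial

theorem Matrix.charpoly_scalar_add_of_const {n R : Type*} [Fintype n] [DecidableEq n] [CommRing R]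
    [Nonempty n] (c d : R) :
    (scalar n c + of fun _ _ => d).charpoly
      = (X - C (c + Fintype.card n * d)) * (X - C c) ^ (Fintype.card n - 1) := by
  have hJ : (of fun _ _ => d : Matrix n n R) = vecMulVec (fun _ => d) (fun _ => 1) := by
    ext; simp [vecMulVec]
  obtain ⟨m, hm⟩ : ∃ m, Fintype.card n = m + 1 := Nat.exists_eq_add_one.mpr Fintype.card_pos
  rw [add_comm, ← sub_neg_eq_add, ← map_neg, charpoly_sub_scalar, hJ, charpoly_vecMulVec]
  simp only [hm, pow_succ, dotProduct, mul_one, sum_const, card_univ, nsmul_eq_mul, Nat.cast_add,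
    Nat.cast_one, add_tsub_cancel_right, smul_eq_C_mul, map_mul, map_add, map_natCast, map_one,
    map_neg, sub_comp, mul_comp, pow_comp, X_comp, add_comp, natCast_comp, one_comp, C_comp]
  ring

section BlockConst

variable {ι κ R : Type*} [DecidableEq κ]

/-- The mean adjacency matrix `Z (a I + b J) Zᵀ` of an SBM with block labels `z`. -/
def blockConst [CommRing R] (z : ι → κ) (a b : R) : Matrix ι ι R :=
  of fun i j => (if z i = z j then a else 0) + b

def rowNormalize [Fintype ι] [Field R] (M : Matrix ι ι R) : Matrix ι ι R :=
  of fun i j => M i j / ∑ w, M i w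

section Algebra

variable [CommRing R] {z : ι → κ}

theorem blockConst_add (a b c d : R) :
    blockConst z a b + blockConst z c d = blockConst z (a + c) (b + d) := by
  ext i j
  simp only [blockConst, Matrix.add_apply, of_apply]
  split_ifs <;> ring

theorem const_sub_blockConst (c a b : R) :
    (of fun _ _ => c) - blockConst z a b = blockConst z (-a) (c - b) := by
  ext i j
  simp only [blockConst, Matrix.sub_apply, of_apply]
  split_ifs <;> ring

theorem blockConst_hadamard (a b c d : R) :
    blockConst z a b ⊙ blockConst z c d = blockConst z (a * c + a * d + b * c) (b * d) := by
  ext i j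
  simp only [blockConst, hadamard_apply, of_apply]
  split_ifs <;> ring

end Algebra

variable [Fintype ι] [Fintype κ] {z : ι → κ} {s : ℕ}

theorem sum_comp_eq_mul_sum_of_card_fiber [CommSemiring R] (hz : ∀ k, #{i | z i = k} = s)
    (f : κ → R) : ∑ i, f (z i) = s * ∑ k, f k := by
  rw [← Finset.sum_fiberwise' univ z f, mul_sum]
  simp [hz, nsmul_eq_mul]

theorem card_eq_mul_of_card_fiber (hz : ∀ k, #{i | z i = k} = s) :
    Fintype.card ι = s * Fintype.card κ := by
  simpa using sum_comp_eq_mul_sum_of_card_fiber (R := ℕ) hz (fun _ => 1)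

variable [CommRing R]

theorem sum_blockConst_row (hz : ∀ k, #{i | z i = k} = s) (a b : R) (i : ι) :
    ∑ j, blockConst z a b i j = s * (a + Fintype.card κ * b) := by
  simp only [blockConst, of_apply]
  rw [sum_comp_eq_mul_sum_of_card_fiber hz (fun k => (if z i = k then a else 0) + b)]
  simp [sum_add_distrib]

theorem blockConst_mul (hz : ∀ k, #{i | z i = k} = s) (a b c d : R) :
    blockConst z a b * blockConst z c d
      = blockConst z (s * (a * c)) (s * (a * d + b * c + Fintype.card κ * b * d)) := by
  ext i j
  rw [mul_apply]
  simp only [blockConst, of_apply]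
  rw [sum_comp_eq_mul_sum_of_card_fiber hz
    (fun k => ((if z i = k then a else 0) + b) * ((if k = z j then c else 0) + d))]
  simp only [mul_add, mul_ite, add_mul, ite_mul, zero_mul, mul_zero, sum_add_distrib, sum_ite_eq',
    sum_ite_eq, mem_univ, if_true, sum_const, card_univ, nsmul_eq_mul]
  split_ifs <;> ring

theorem charpoly_blockConst [DecidableEq ι] [Nonempty κ] (hz : ∀ k, #{i | z i = k} = s)
    (hs : 0 < s) (a b : R) :
    (blockConst z a b).charpoly = (X - C (s * (a + Fintype.card κ * b))) *
      (X - C (s * a)) ^ (Fintype.card κ - 1) * X ^ (Fintype.card ι - Fintype.card κ) := by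
  let E : Matrix ι κ R := of fun i k => if z i = k then 1 else 0
  let T : Matrix κ ι R := of fun k j => (if k = z j then a else 0) + b
  have hET : E * T = blockConst z a b := by
    ext i j
    simp [E, T, blockConst, mul_apply]
  have hTE : T * E = scalar κ (s * a) + of fun _ _ => s * b := by
    ext k l
    rw [mul_apply]
    simp only [E, T, of_apply]
    rw [sum_comp_eq_mul_sum_of_card_fiber hz
      (fun m => ((if k = m then a else 0) + b) * if m = l then 1 else 0)]
    by_cases h : k = l <;> simp [h, mul_add]
  have hle : Fintype.card κ ≤ Fintype.card ι := by
    rw [card_eq_mul_of_card_fiber hz]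
    exact Nat.le_mul_of_pos_left _ hs
  have h_top : s * a + Fintype.card κ * (s * b) = s * (a + Fintype.card κ * b) := by ring
  rw [← hET, charpoly_mul_comm_of_le _ _ hle, hTE, charpoly_scalar_add_of_const, h_top, mul_comm]

end BlockConst

section RowNormalize

variable {ι κ R : Type*} [Fintype ι] [Fintype κ] [DecidableEq κ] [Field R]
  {z : ι → κ} {s : ℕ}

theorem rowNormalize_blockConst (hz : ∀ k, #{i | z i = k} = s) (a b : R) :
    rowNormalize (blockConst z a b) = blockConst z (a / (s * (a + Fintype.card κ * b)))
      (b / (s * (a + Fintype.card κ * b))) := by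
  ext i j
  simp only [rowNormalize, of_apply, sum_blockConst_row hz]
  simp only [blockConst, of_apply, add_div, ite_div, zero_div]

theorem charpoly_rowNormalize_blockConst [DecidableEq ι] [Nonempty κ]
    (hz : ∀ k, #{i | z i = k} = s) {a b : R} (hD : s * (a + Fintype.card κ * b) ≠ 0) :
    (rowNormalize (blockConst z a b)).charpoly = (X - C 1) *
      (X - C (a / (a + Fintype.card κ * b))) ^ (Fintype.card κ - 1) *
        X ^ (Fintype.card ι - Fintype.card κ) := by
  have hs : (s : R) ≠ 0 := left_ne_zero_of_mul hD
  have hab : a + Fintype.card κ * b ≠ 0 := right_ne_zero_of_mul hD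
  have h_top : s * (a / (s * (a + Fintype.card κ * b)) +
      Fintype.card κ * (b / (s * (a + Fintype.card κ * b)))) = 1 := by
    field_simp
  have h_second : s * (a / (s * (a + Fintype.card κ * b))) = a / (a + Fintype.card κ * b) := by
    field_simp
  have hs_pos : 0 < s := Nat.pos_of_ne_zero (by rintro rfl; simp at hs)
  rw [rowNormalize_blockConst hz, charpoly_blockConst hz hs_pos, h_top, h_second]

end RowNormalize

theorem stmt6_general {N K s : ℕ} (hK : 2 ≤ K) (hs : 0 < s)
    (z : Fin N → Fin K)
    (hbal : ∀ k, (Finset.univ.filter (fun i => z i = k)).card = s)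
    (p r : ℝ) (hr : 0 < r) (hpr : r < p + r) (h1 : p + r < 1) :
    let A : Matrix (Fin N) (Fin N) ℝ :=
      Matrix.of fun i j => (if z i = z j then p else 0) + r
    let Abar : Matrix (Fin N) (Fin N) ℝ := (Matrix.of fun _ _ => (1 : ℝ)) - A
    let W : Matrix (Fin N) (Fin N) ℝ :=
      Matrix.hadamard (A * Abar + Abar * A) A
    let PA : Matrix (Fin N) (Fin N) ℝ :=
      Matrix.of fun i j => A i j / (∑ w, A i w)
    let PW : Matrix (Fin N) (Fin N) ℝ :=
      Matrix.of fun i j => W i j / (∑ w, W i w)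
    -- explicit second eigenvalues, functions of K, p, r only:
    let u : ℝ := (1 - r) * r * K + (1 - r) * p - p * r
    let ν : ℝ := 1 / ((K : ℝ) * r / p + 1)
    let μ : ℝ := 1 / ((K : ℝ) * (u * r / (p * (u - r * p - p ^ 2))) + 1)
    PA.charpoly = (X - C 1) * (X - C ν) ^ (K - 1) * X ^ (N - K) ∧
    PW.charpoly = (X - C 1) * (X - C μ) ^ (K - 1) * X ^ (N - K) ∧
    0 < μ ∧ μ < ν ∧ ν < 1 := by
  intro A Abar W PA PW u ν μ
  have : Nonempty (Fin K) := ⟨⟨0, by omega⟩⟩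
  have hp : 0 < p := by linarith
  have hK2 : (2 : ℝ) ≤ K := by exact_mod_cast hK
  have hsR : (0 : ℝ) < s := by exact_mod_cast hs
  have hKR : (0 : ℝ) < K := by linarith
  set v := u - r * p - p ^ 2 with hv_def
  -- `v ≥ (2 r + p) (1 - r - p)` once `K ≥ 2`
  have hv : 0 < v := by
    have hq : 0 < 1 - r - p := by linarith
    nlinarith [mul_pos hr hq, mul_pos hp hq,
      mul_nonneg (mul_nonneg hr.le hq.le) (by linarith : (0 : ℝ) ≤ K - 2)]
  have hvu : v < u := by nlinarith [mul_pos hr hp]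
  have hu : 0 < u := hv.trans hvu
  have hA : A = blockConst z p r := rfl
  have hW : W = blockConst z (2 * s * p * v) (2 * s * u * r) := by
    simp only [W, Abar, hA, const_sub_blockConst, blockConst_mul hbal, blockConst_add,
      blockConst_hadamard, Fintype.card_fin]
    exact congrArg₂ _ (by ring) (by ring)
  have hν : ν = p / (p + K * r) := by
    simp only [ν]; field_simp; ring
  have hμ : μ = 2 * s * p * v / (2 * s * p * v + K * (2 * s * u * r)) := by
    simp only [μ]; rw [← hv_def]; field_simp; ring
  refine ⟨?_, ?_, ?_, ?_, ?_⟩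
  · have hPA : PA = rowNormalize (blockConst z p r) := rfl
    rw [hPA, charpoly_rowNormalize_blockConst hbal (by rw [Fintype.card_fin]; positivity), hν]
    simp only [Fintype.card_fin]
  · have hPW : PW = rowNormalize W := rfl
    rw [hPW, hW, charpoly_rowNormalize_blockConst hbal (by rw [Fintype.card_fin]; positivity), hμ]
    simp only [Fintype.card_fin]
  · rw [hμ]; positivity
  · rw [hν, hμ, div_lt_div_iff₀ (by positivity) (by positivity)]
    nlinarith [mul_pos (mul_pos (mul_pos (mul_pos hsR hp) hKR) hr) (sub_pos.2 hvu)]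
  · rw [hν, div_lt_one (by positivity)]
    nlinarith [mul_pos hKR hr]

/-- Population spectral gap result: under a balanced `K`-block SBM with
`B = pI + rJ`, `0 < r < p + r < 1`, the second eigenvalues satisfy
`0 < λ₂(P_W̃) < λ₂(P_𝒜) < 1`; moreover `λ₂(P_𝒜) = ν` and `λ₂(P_W̃) = μ` are
explicit functions of `K, p, r` only (independent of `N`), so the gap
`λ₂(P_𝒜) - λ₂(P_W̃)` does not depend on `N`. The eigenvalue identities are
encoded via characteristic polynomials. -/
theorem stmt6 {N K s : ℕ} (hK : 2 ≤ K) (hs : 0 < s) (hN : N = s * K)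
    (z : Fin N → Fin K)
    (hbal : ∀ k, (Finset.univ.filter (fun i => z i = k)).card = s)
    (p r : ℝ) (hr : 0 < r) (hpr : r < p + r) (h1 : p + r < 1) :
    let A : Matrix (Fin N) (Fin N) ℝ :=
      Matrix.of fun i j => (if z i = z j then p else 0) + r
    let Abar : Matrix (Fin N) (Fin N) ℝ := (Matrix.of fun _ _ => (1 : ℝ)) - A
    let W : Matrix (Fin N) (Fin N) ℝ :=
      Matrix.hadamard (A * Abar + Abar * A) A
    let PA : Matrix (Fin N) (Fin N) ℝ :=
      Matrix.of fun i j => A i j / (∑ w, A i w)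
    let PW : Matrix (Fin N) (Fin N) ℝ :=
      Matrix.of fun i j => W i j / (∑ w, W i w)
    -- explicit second eigenvalues, functions of K, p, r only:
    let u : ℝ := (1 - r) * r * K + (1 - r) * p - p * r
    let ν : ℝ := 1 / ((K : ℝ) * r / p + 1)
    let μ : ℝ := 1 / ((K : ℝ) * (u * r / (p * (u - r * p - p ^ 2))) + 1)
    PA.charpoly = (X - C 1) * (X - C ν) ^ (K - 1) * X ^ (N - K) ∧
    PW.charpoly = (X - C 1) * (X - C μ) ^ (K - 1) * X ^ (N - K) ∧
    0 < μ ∧ μ < ν ∧ ν < 1 :=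
  stmt6_general hK hs z hbal p r hr hpr h1
end

section
/- Under the Stochastic Blockmodel with B = pI + rJ_{K×K}, equal block sizes, write B̃ = (BΘB̄ + B̄ΘB)·B with Θ = (N/K)I. Then B̃ = p̃I + r̃J where p̃ = 2p(N/K)(u − rp − p²), r̃ = 2(N/K)ur, and u = (1−r)rK + (1−r)p − pr. Consequently, in the asymptotic regime where K → ∞ and r → 0 with p and R = Kr/p fixed, λ₂(P_W̃) → 1/(cR + 1) with c = (R+1)/(R+1−p). -/
/-!
Matrices of the form `p • 1 + r • J` (`diagPlusConst p r`) are closed under sum, product and Hadamard product, with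
explicit coefficients (using `J * J = K • J`), so `B̃` is computed coefficientwise. For the limit,
`K r = R p` turns `K r̃ / p̃` into a rational function of `r` that is continuous at `r = 0`,
where it equals `c R`.
-/

open Finset Matrix Filter Topology

section DiagPlusConst

variable {n α : Type*} [DecidableEq n] [CommRing α]

/-- The matrix `p • 1 + r • J`, with `J` the all-ones matrix. -/
def diagPlusConst (p r : α) : Matrix n n α :=
  of fun k l => (if k = l then p else 0) + r

@[simp]
theorem diagPlusConst_apply (p r : α) (k l : n) :
    (diagPlusConst p r : Matrix n n α) k l = (if k = l then p else 0) + r :=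
  rfl

theorem of_const_eq_diagPlusConst (c : α) :
    (of fun _ _ => c : Matrix n n α) = diagPlusConst 0 c := by
  ext k l
  simp

theorem diagonal_const_eq_diagPlusConst (m : α) :
    (diagonal fun _ => m : Matrix n n α) = diagPlusConst m 0 := by
  ext k l
  simp [diagonal_apply]

theorem diagPlusConst_add (p r q s : α) :
    (diagPlusConst p r + diagPlusConst q s : Matrix n n α) = diagPlusConst (p + q) (r + s) := by
  ext k l
  simp only [Matrix.add_apply, diagPlusConst_apply]
  split_ifs <;> ring

theorem diagPlusConst_sub (p r q s : α) :
    (diagPlusConst p r - diagPlusConst q s : Matrix n n α) = diagPlusConst (p - q) (r - s) := by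
  ext k l
  simp only [Matrix.sub_apply, diagPlusConst_apply]
  split_ifs <;> ring

theorem diagPlusConst_mul [Fintype n] (p r q s : α) :
    (diagPlusConst p r * diagPlusConst q s : Matrix n n α)
      = diagPlusConst (p * q) (p * s + r * q + Fintype.card n * r * s) := by
  ext k l
  simp only [mul_apply, diagPlusConst_apply, add_mul, mul_add, ite_mul, mul_ite, zero_mul,
    mul_zero, sum_add_distrib, sum_ite_eq, sum_ite_eq', mem_univ, if_true, sum_const,
    card_univ, nsmul_eq_mul]
  split_ifs <;> ring

theorem hadamard_diagPlusConst (p r q s : α) :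
    (diagPlusConst p r ⊙ diagPlusConst q s : Matrix n n α)
      = diagPlusConst (p * q + p * s + r * q) (r * s) := by
  ext k l
  simp only [hadamard_apply, diagPlusConst_apply]
  split_ifs <;> ring

end DiagPlusConst

/-- `K r̃ / p̃` as a function of `x = r`, after substituting `K r = R p`. -/
noncomputable def scaledRatio (p R x : ℝ) : ℝ :=
  let u := (1 - x) * (R * p) + (1 - x) * p - p * x
  u * (R * p) / (p * (u - x * p - p ^ 2))

theorem scaledRatio_zero {p R : ℝ} (hp : p ≠ 0) (hRp : R + 1 - p ≠ 0) :
    scaledRatio p R 0 = (R + 1) / (R + 1 - p) * R := by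
  have h : R * p + p - p ^ 2 ≠ 0 := by
    rw [show R * p + p - p ^ 2 = p * (R + 1 - p) by ring]; positivity
  simp only [scaledRatio, sub_zero, one_mul, mul_zero, zero_mul]
  field_simp

theorem continuousAt_scaledRatio_zero {p R : ℝ} (hp : p ≠ 0) (hRp : R + 1 - p ≠ 0) :
    ContinuousAt (scaledRatio p R) 0 := by
  have h : p * (R * p + p - p ^ 2) ≠ 0 := by
    rw [show p * (R * p + p - p ^ 2) = p ^ 2 * (R + 1 - p) by ring]; positivity
  unfold scaledRatio
  fun_prop (disch := simpa using h)

theorem natCast_mul_ratio_eq_scaledRatio (p R : ℝ) {K : ℕ} (hK : K ≠ 0) :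
    let r : ℝ := R * p / K
    let u : ℝ := (1 - r) * r * K + (1 - r) * p - p * r
    (K : ℝ) * (u * r / (p * (u - r * p - p ^ 2))) = scaledRatio p R r := by
  intro r u
  have hKr : r * K = R * p := div_mul_cancel₀ _ (Nat.cast_ne_zero.mpr hK)
  simp only [scaledRatio, u, mul_assoc, hKr]
  rw [← hKr]
  ring

theorem tendsto_one_div_natCast_mul_ratio_add_one {p R : ℝ} (hp : 0 < p) (hp1 : p < 1)
    (hR : 0 < R) :
    Tendsto (fun K : ℕ =>
        let r : ℝ := R * p / K
        let u : ℝ := (1 - r) * r * K + (1 - r) * p - p * r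
        1 / ((K : ℝ) * (u * r / (p * (u - r * p - p ^ 2))) + 1))
      atTop (𝓝 (1 / ((R + 1) / (R + 1 - p) * R + 1))) := by
  have hRp : 0 < R + 1 - p := by linarith
  have hlim := (continuousAt_scaledRatio_zero hp.ne' hRp.ne').tendsto.comp
    (tendsto_const_div_atTop_nhds_zero_nat (R * p))
  rw [scaledRatio_zero hp.ne' hRp.ne'] at hlim
  have hL : (R + 1) / (R + 1 - p) * R + 1 ≠ 0 := by positivity
  refine (tendsto_const_nhds.div (hlim.add_const 1) hL).congr' ?_
  filter_upwards [eventually_ne_atTop 0] with K hK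
  simp only [Pi.div_apply, Function.comp_apply, natCast_mul_ratio_eq_scaledRatio p R hK]

theorem stmt7_general {N K : ℕ}
    (p r R : ℝ) (hp1 : 0 < p) (hp2 : p < 1) (hR : 0 < R) :
    (let B : Matrix (Fin K) (Fin K) ℝ :=
      Matrix.of fun k l => (if k = l then p else 0) + r
    let Bbar : Matrix (Fin K) (Fin K) ℝ := (Matrix.of fun _ _ => (1 : ℝ)) - B
    let m : ℝ := (N : ℝ) / K
    let Θ : Matrix (Fin K) (Fin K) ℝ := Matrix.diagonal fun _ => m
    let u : ℝ := (1 - r) * r * K + (1 - r) * p - p * r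
    let pt : ℝ := 2 * p * m * (u - r * p - p ^ 2)
    let rt : ℝ := 2 * m * u * r
    Matrix.hadamard (B * Θ * Bbar + Bbar * Θ * B) B
      = Matrix.of fun k l => (if k = l then pt else 0) + rt) ∧
    Filter.Tendsto
      (fun K' : ℕ =>
        let r' : ℝ := R * p / K'
        let u' : ℝ := (1 - r') * r' * K' + (1 - r') * p - p * r'
        1 / ((K' : ℝ) * (u' * r' / (p * (u' - r' * p - p ^ 2))) + 1))
      Filter.atTop
      (nhds (1 / ((R + 1) / (R + 1 - p) * R + 1))) := by
  constructor
  · intro B Bbar m Θ u pt rt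
    show _ = diagPlusConst pt rt
    have hB : B = diagPlusConst p r := rfl
    simp only [Bbar, Θ, hB, of_const_eq_diagPlusConst, diagonal_const_eq_diagPlusConst,
      diagPlusConst_sub, diagPlusConst_mul, diagPlusConst_add, hadamard_diagPlusConst, Fintype.card_fin]
    congr 1 <;> simp only [pt, rt, u] <;> ring
  · exact tendsto_one_div_natCast_mul_ratio_add_one hp1 hp2 hR

/-- Block-level identity `B̃ = (BΘB̄ + B̄ΘB)·B = p̃I + r̃J` with
`p̃ = 2p(N/K)(u - rp - p²)`, `r̃ = 2(N/K)ur`, `u = (1-r)rK + (1-r)p - pr`;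
and in the asymptotic regime `K → ∞`, `r = Rp/K → 0` with `p` and `R = Kr/p`
fixed, `λ₂(P_W̃) = 1/(K(r̃/p̃) + 1) → 1/(cR + 1)` with `c = (R+1)/(R+1-p)`. -/
theorem stmt7 {N K : ℕ} (hK : 0 < K)
    (p r R : ℝ) (hr : 0 < r) (hpr : r < p + r) (h1 : p + r < 1)
    (hp1 : 0 < p) (hp2 : p < 1) (hR : 0 < R) :
    (let B : Matrix (Fin K) (Fin K) ℝ :=
      Matrix.of fun k l => (if k = l then p else 0) + r
    let Bbar : Matrix (Fin K) (Fin K) ℝ := (Matrix.of fun _ _ => (1 : ℝ)) - B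
    let m : ℝ := (N : ℝ) / K
    let Θ : Matrix (Fin K) (Fin K) ℝ := Matrix.diagonal fun _ => m
    let u : ℝ := (1 - r) * r * K + (1 - r) * p - p * r
    let pt : ℝ := 2 * p * m * (u - r * p - p ^ 2)
    let rt : ℝ := 2 * m * u * r
    Matrix.hadamard (B * Θ * Bbar + Bbar * Θ * B) B
      = Matrix.of fun k l => (if k = l then pt else 0) + rt) ∧
    Filter.Tendsto
      (fun K' : ℕ =>
        let r' : ℝ := R * p / K'
        let u' : ℝ := (1 - r') * r' * K' + (1 - r') * p - p * r'
        1 / ((K' : ℝ) * (u' * r' / (p * (u' - r' * p - p ^ 2))) + 1))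
      Filter.atTop
      (nhds (1 / ((R + 1) / (R + 1 - p) * R + 1))) :=
  stmt7_general p r R hp1 hp2 hR
end

section
/- Under the Stochastic Blockmodel with B = pI + rJ_{K×K}, 0 < r < p+r < 1, equal block sizes, let u, v be two nodes in the same block. Then the anti-cluster transition probability is strictly smaller than the simple random walk transition probability: P_W̃(u,v) < P_𝒜(u,v); moreover, for w in a different block from u, P_W̃(u,w) > P_𝒜(u,w). -/
/-!
Call a matrix a block matrix with entries `(c, d)` if its `(i, j)` entry is `c` when `i` and `j`
lie in the same block and `d` otherwise. For balanced blocks of size `s` among `n` nodes such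
matrices are closed under sums, products and Hadamard products, and their rows sum to
`s c + (n - s) d`. Hence `𝒜 = (p + r, r)` gives `W̃ = (2 X (p + r), 2 Y r)`, where `X` and `Y` are
the entries of `𝒜 𝒜̄`, and `Y - X = s p² > 0`. The in-block transition probability
`c / (s c + (n - s) d)` increases with the ratio `c / d`, and `W̃` has the smaller ratio.
-/

open Finset Matrix

section BlockMatrix

variable {ι κ : Type*} [DecidableEq κ]

def blockMatrix (z : ι → κ) (c d : ℝ) : Matrix ι ι ℝ :=
  of fun i j => if z i = z j then c else d

variable {z : ι → κ}

theorem blockMatrix_add (a b c d : ℝ) :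
    blockMatrix z a b + blockMatrix z c d = blockMatrix z (a + c) (b + d) := by
  ext i j; simp only [blockMatrix, Matrix.add_apply, of_apply]; split_ifs <;> rfl

theorem const_sub_blockMatrix (c a b : ℝ) :
    (of fun _ _ => c) - blockMatrix z a b = blockMatrix z (c - a) (c - b) := by
  ext i j; simp only [blockMatrix, Matrix.sub_apply, of_apply]; split_ifs <;> rfl

theorem blockMatrix_hadamard (a b c d : ℝ) :
    hadamard (blockMatrix z a b) (blockMatrix z c d) = blockMatrix z (a * c) (b * d) := by
  ext i j; simp only [blockMatrix, hadamard_apply, of_apply]; split_ifs <;> rfl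

variable [Fintype ι] {s : ℕ}

theorem sum_ite_eq_of_balanced (hbal : ∀ k, #{i | z i = k} = s) (i : ι) (c d : ℝ) :
    ∑ k, (if z i = z k then c else d) = s * c + (Fintype.card ι - s) * d := by
  have hin : #{k | z i = z k} = s := by simpa [eq_comm] using hbal (z i)
  have hsplit := card_filter_add_card_filter_not (s := univ) (fun k => z i = z k)
  rw [hin, card_univ] at hsplit
  rw [sum_ite, sum_const, sum_const, nsmul_eq_mul, nsmul_eq_mul, hin, ← hsplit]
  push_cast
  ring

theorem blockMatrix_mul_apply (hbal : ∀ k, #{i | z i = k} = s) (a b c d : ℝ) (i j : ι) :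
    (blockMatrix z a b * blockMatrix z c d) i j =
      if z i = z j then s * (a * c) + (Fintype.card ι - s) * (b * d)
      else s * (a * d + b * c) + (Fintype.card ι - 2 * s) * (b * d) := by
  simp only [blockMatrix, mul_apply, of_apply]
  split_ifs with hij
  · have (k : ι) : (if z i = z k then a else b) * (if z k = z j then c else d) =
        if z i = z k then a * c else b * d := by
      have hkj : z k = z j ↔ z i = z k := ⟨fun h => hij.trans h.symm, fun h => h.symm.trans hij⟩
      simp only [hkj]
      split_ifs <;> rfl
    rw [sum_congr rfl fun k _ => this k, sum_ite_eq_of_balanced hbal]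
  · have (k : ι) : (if z i = z k then a else b) * (if z k = z j then c else d) =
        (if z i = z k then a * d else b * d) + (if z j = z k then b * c - b * d else 0) := by
      by_cases hik : z i = z k
      · have hjk : z j ≠ z k := fun h => hij (hik.trans h.symm)
        simp [hik, hjk, Ne.symm hjk]
      · by_cases hjk : z j = z k
        · simp [hik, hjk]
        · simp [hik, hjk, Ne.symm hjk]
    rw [sum_congr rfl fun k _ => this k, sum_add_distrib, sum_ite_eq_of_balanced hbal,
      sum_ite_eq_of_balanced hbal]
    ring

theorem blockMatrix_mul (hbal : ∀ k, #{i | z i = k} = s) (a b c d : ℝ) :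
    blockMatrix z a b * blockMatrix z c d =
      blockMatrix z (s * (a * c) + (Fintype.card ι - s) * (b * d))
        (s * (a * d + b * c) + (Fintype.card ι - 2 * s) * (b * d)) :=
  ext fun i j => blockMatrix_mul_apply hbal a b c d i j

def antiClusterWeight (M : Matrix ι ι ℝ) : Matrix ι ι ℝ :=
  let Mbar := (of fun _ _ => (1 : ℝ)) - M
  hadamard (M * Mbar + Mbar * M) M

theorem antiClusterWeight_blockMatrix (hbal : ∀ k, #{i | z i = k} = s) (a b : ℝ) :
    antiClusterWeight (blockMatrix z a b) =
      blockMatrix z (2 * (s * (a * (1 - a)) + (Fintype.card ι - s) * (b * (1 - b))) * a)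
        (2 * (s * (a * (1 - b) + b * (1 - a)) + (Fintype.card ι - 2 * s) * (b * (1 - b))) * b) := by
  simp only [antiClusterWeight, const_sub_blockMatrix, blockMatrix_mul hbal, blockMatrix_add,
    blockMatrix_hadamard]
  congr 1 <;> ring

noncomputable def transitionMatrix (M : Matrix ι ι ℝ) : Matrix ι ι ℝ :=
  of fun i j => M i j / ∑ w, M i w

theorem transitionMatrix_blockMatrix_apply (hbal : ∀ k, #{i | z i = k} = s) (c d : ℝ)
    (i j : ι) :
    transitionMatrix (blockMatrix z c d) i j =
      (if z i = z j then c else d) / (s * c + (Fintype.card ι - s) * d) := by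
  simp only [transitionMatrix, blockMatrix, of_apply, sum_ite_eq_of_balanced hbal]

end BlockMatrix

theorem div_lt_div_and_div_lt_div_of_mul_lt {s m c d c' d' : ℝ} (hs : 0 < s) (hm : 0 < m)
    (hc : 0 < c) (hd : 0 < d) (hc' : 0 < c') (hd' : 0 < d') (h : c' * d < c * d') :
    c' / (s * c' + m * d') < c / (s * c + m * d) ∧
      d / (s * c + m * d) < d' / (s * c' + m * d') := by
  have hD : 0 < s * c + m * d := by positivity
  have hD' : 0 < s * c' + m * d' := by positivity
  constructor <;> rw [div_lt_div_iff₀ (by assumption) (by assumption)]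
  · linarith [mul_lt_mul_of_pos_left h hm]
  · linarith [mul_lt_mul_of_pos_left h hs]

/-- Under a balanced `K`-block SBM with `B = pI + rJ`, `0 < r < p + r < 1`,
anti-cluster sampling strictly decreases the in-block transition probability
and strictly increases the out-of-block transition probability:
for `z u = z v`, `P_W̃(u,v) < P_𝒜(u,v)`, and for `z u ≠ z w`,
`P_W̃(u,w) > P_𝒜(u,w)`. -/
theorem stmt13 {N K s : ℕ} (hK : 2 ≤ K) (hs : 0 < s) (hN : N = s * K)
    (z : Fin N → Fin K)
    (hbal : ∀ k, (Finset.univ.filter (fun i => z i = k)).card = s)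
    (p r : ℝ) (hr : 0 < r) (hpr : r < p + r) (h1 : p + r < 1) :
    let A : Matrix (Fin N) (Fin N) ℝ :=
      Matrix.of fun i j => (if z i = z j then p else 0) + r
    let Abar : Matrix (Fin N) (Fin N) ℝ := (Matrix.of fun _ _ => (1 : ℝ)) - A
    let W : Matrix (Fin N) (Fin N) ℝ :=
      Matrix.hadamard (A * Abar + Abar * A) A
    let PA : Matrix (Fin N) (Fin N) ℝ :=
      Matrix.of fun i j => A i j / (∑ w, A i w)
    let PW : Matrix (Fin N) (Fin N) ℝ :=
      Matrix.of fun i j => W i j / (∑ w, W i w)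
    ∀ u v w : Fin N,
      (z u = z v → PW u v < PA u v) ∧
      (z u ≠ z w → PW u w > PA u w) := by
  intro A Abar W PA PW u v w
  have hA : A = blockMatrix z (p + r) r := by
    ext i j; simp only [A, blockMatrix, of_apply]; split_ifs <;> ring
  have hW : W = antiClusterWeight A := rfl
  rw [hA, antiClusterWeight_blockMatrix hbal, Fintype.card_fin] at hW
  have hs' : (0 : ℝ) < s := by exact_mod_cast hs
  have hp : 0 < p := by linarith
  have hm : (0 : ℝ) < N - s := by
    have : (2 : ℝ) ≤ K := by exact_mod_cast hK
    rw [hN]; push_cast; nlinarith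
  set X := s * ((p + r) * (1 - (p + r))) + (N - s) * (r * (1 - r))
  set Y := s * ((p + r) * (1 - r) + r * (1 - (p + r))) + (N - 2 * s) * (r * (1 - r))
  have hX : 0 < X := by
    have : 0 < (p + r) * (1 - (p + r)) := by nlinarith
    have : 0 < r * (1 - r) := by nlinarith
    positivity
  have hXY : X < Y := by
    have hgap : Y - X = s * p ^ 2 := by simp only [X, Y]; ring
    linarith [show 0 < (s : ℝ) * p ^ 2 by positivity]
  have hY : 0 < Y := hX.trans hXY
  obtain ⟨hin, hout⟩ := div_lt_div_and_div_lt_div_of_mul_lt (c := p + r) (d := r)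
    (c' := 2 * X * (p + r)) (d' := 2 * Y * r) hs' hm (by positivity) hr (by positivity)
    (by positivity) (by linarith [mul_lt_mul_of_pos_left hXY (by positivity : 0 < 2 * (p + r) * r)])
  refine ⟨fun huv => ?_, fun huw => ?_⟩
  · change transitionMatrix W u v < transitionMatrix A u v
    rw [hW, hA, transitionMatrix_blockMatrix_apply hbal, transitionMatrix_blockMatrix_apply hbal]
    simpa [huv] using hin
  · change transitionMatrix A u w < transitionMatrix W u w
    rw [hW, hA, transitionMatrix_blockMatrix_apply hbal, transitionMatrix_blockMatrix_apply hbal]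
    simpa [huw] using hout
end
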